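/- Let G be a connected bipartite graph with partite sets U and W where |U| = m, |W| = n, m ≥ n. If G is not the complete bipartite graph K_{m,n} and G contains a matching saturating W (a matching of order 2n), then |V(G)| + δ(G) < 2|V(G)| - β(G). -/

import Mathlib

open SimpleGraph Finset

/-- `strf G f` is the maximum edge label `f(u)+f(v)` for the numbering given by the
equivalence `f` (vertex `v` receives label `(f v : ℕ) + 1 ∈ {1,…,n}`). -/
noncomputable def strf {V : Type*} [Fintype V] [DecidableEq V] (G : SimpleGraph V)
    (f : V ≃ Fin (Fintype.card V)) : ℕ :=
  sSup {s | ∃ u v, G.Adj u v ∧ s = ((f u : ℕ) + 1) + ((f v : ℕ) + 1)}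

/-- The strength of a graph: minimum over numberings of the maximum edge label. -/
noncomputable def strength {V : Type*} [Fintype V] [DecidableEq V] (G : SimpleGraph V) : ℕ :=
  sInf {s | ∃ f : V ≃ Fin (Fintype.card V), s = strf G f}

/-- The independence number of a graph. -/
noncomputable def indepNum {V : Type*} [Fintype V] [DecidableEq V] (G : SimpleGraph V) : ℕ :=
  sSup {k | ∃ s : Finset V, (s : Set V).Pairwise (fun u v => ¬ G.Adj u v) ∧ s.card = k}

theorem card_add_minDegree_lt_of_not_completeBipartite {V : Type*} [Fintype V] [DecidableEq V]
    (G : SimpleGraph V) [DecidableRel G.Adj] (U W : Finset V) (m n : ℕ)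
    (hdisj : Disjoint U W) (hcover : U ∪ W = Finset.univ)
    (hUindep : (U : Set V).Pairwise (fun u v => ¬ G.Adj u v))
    (hWindep : (W : Set V).Pairwise (fun u v => ¬ G.Adj u v))
    (hconn : G.Connected)
    (hU : U.card = m) (hW : W.card = n) (hmn : n ≤ m)
    (hnotcomplete : ¬ ∀ u ∈ U, ∀ w ∈ W, G.Adj u w)
    (M : G.Subgraph) (hM : M.IsMatching) (hsat : (W : Set V) ⊆ M.verts) :
    Fintype.card V + G.minDegree < 2 * Fintype.card V - _root_.indepNum G := by
  classical
  have hcard : Fintype.card V = m + n := by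
    rw [← Finset.card_univ, ← hcover, Finset.card_union_of_disjoint hdisj, hU, hW]
  push_neg at hnotcomplete
  obtain ⟨u, hu, w, hw, huw⟩ := hnotcomplete
  have hn1 : 1 ≤ n := by rw [← hW]; exact Finset.card_pos.mpr ⟨w, hw⟩
  have hmem : ∀ v : V, v ∈ U ∨ v ∈ W := by
    intro v
    have : v ∈ U ∪ W := hcover ▸ Finset.mem_univ v
    exact Finset.mem_union.mp this
  -- minimum degree is less than n
  have hdeg : G.degree u < n := by
    have hsub : G.neighborFinset u ⊆ W.erase w := by
      intro v hv
      rw [SimpleGraph.mem_neighborFinset] at hv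
      have hvW : v ∈ W := by
        rcases hmem v with h | h
        · exact absurd hv (hUindep hu h hv.ne)
        · exact h
      refine Finset.mem_erase.mpr ⟨?_, hvW⟩
      rintro rfl; exact huw hv
    calc G.degree u ≤ (W.erase w).card := Finset.card_le_card hsub
      _ < n := by rw [Finset.card_erase_of_mem hw, hW]; omega
  have hδ : G.minDegree < n := lt_of_le_of_lt (G.minDegree_le_degree u) hdeg
  -- independence number is at most m
  have hβ : _root_.indepNum G ≤ m := by
    apply csSup_le'
    rintro k ⟨s, hs, rfl⟩
    choose p hpadj using fun (v : V) (hv : v ∈ W) => (hM (hsat hv)).exists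
    have hpU : ∀ (v : V) (hv : v ∈ W), p v hv ∈ U := by
      intro v hv
      have hadj : G.Adj v (p v hv) := M.adj_sub (hpadj v hv)
      rcases hmem (p v hv) with h | h
      · exact h
      · exact absurd hadj (hWindep hv h hadj.ne)
    rw [← hU]
    refine Finset.card_le_card_of_injOn
      (fun v => if h : v ∈ W then p v h else v) ?_ ?_
    · intro v hv
      by_cases h : v ∈ W
      · simp only [h, dif_pos]; exact hpU v h
      · simp only [h, dif_neg, not_false_iff]
        rcases hmem v with h' | h'
        · exact h'
        · exact absurd h' h
    · intro v1 hv1 v2 hv2 heq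
      simp only at heq
      by_cases h1 : v1 ∈ W <;> by_cases h2 : v2 ∈ W
      · rw [dif_pos h1, dif_pos h2] at heq
        have ha1 : M.Adj (p v1 h1) v1 := (hpadj v1 h1).symm
        have ha2 : M.Adj (p v1 h1) v2 := heq ▸ (hpadj v2 h2).symm
        have hx : p v1 h1 ∈ M.verts := ha1.fst_mem
        exact ((hM hx).unique ha1 ha2)
      · rw [dif_pos h1, dif_neg h2] at heq
        have hadj : G.Adj v1 v2 := heq ▸ M.adj_sub (hpadj v1 h1)
        exact absurd hadj (hs hv1 hv2 hadj.ne)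
      · rw [dif_neg h1, dif_pos h2] at heq
        have hadj : G.Adj v2 v1 := heq ▸ M.adj_sub (hpadj v2 h2)
        exact absurd hadj (hs hv2 hv1 hadj.ne)
      · rwa [dif_neg h1, dif_neg h2] at heq
  omega
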